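/- Let c : List Bool, let x_1, ..., x_k be positive integers, let v = false :: (c ++ [false]) be the padded word, and let P be the canonical pattern of (x_1, ..., x_k). Suppose (i) P is a sublist of v with P.count true = v.count true (only white cards were removed to reach the canonical pattern), and (ii) the multiset of entries of trueRuns v equals the multiset {x_1, ..., x_k}. Then trueRuns v = [x_1, ..., x_k] as ordered lists, and hence trueRuns c = [x_1, ..., x_k]; i.e., the row's maximal black blocks have lengths exactly x_1, ..., x_k in this order from left to right (per-row soundness: Phase 1 plus Phase 3 force the correct order). -/

import Mathlib

/-- The list of lengths of the maximal blocks of consecutive `true` entries of a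
Boolean list, in order from left to right. -/
def trueRuns (w : List Bool) : List ℕ :=
  ((w.splitBy (· = ·)).filter (fun g => true ∈ g)).map List.length

/-- The canonical pattern of a clue `(x_1, ..., x_k)`:
`[false] ++ replicate x_1 true ++ [false] ++ ... ++ [false] ++ replicate x_k true ++ [false]`. -/
def pattern (x : List ℕ) : List Bool :=
  (x.map (fun a => false :: List.replicate a true)).flatten ++ [false]

/-! ### Auxiliary lemmas about `List.splitBy` -/

theorem myLoop_append {α} (r : α → α → Bool) : ∀ (l : List α) (a : α) (g : List α)
    (gs : List (List α)), List.splitBy.loop r l a g gs =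
      gs.reverse ++ List.splitBy.loop r l a g [] := by
  intro l
  induction l with
  | nil => intro a g gs; simp [List.splitBy.loop]
  | cons b l ih =>
    intro a g gs
    simp only [List.splitBy.loop]
    cases r a b <;> simp only []
    · rw [ih b [] ((a :: g).reverse :: gs), ih b [] [(a :: g).reverse]]; simp
    · exact ih b (a :: g) gs

theorem myLoop_modifyHead {α} (r : α → α → Bool) : ∀ (l : List α) (a : α) (g : List α),
    List.splitBy.loop r l a g [] =
      List.modifyHead (g.reverse ++ ·) (List.splitBy.loop r l a [] []) := by
  intro l
  induction l with
  | nil => intro a g; simp [List.splitBy.loop]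
  | cons b l ih =>
    intro a g
    simp only [List.splitBy.loop]
    cases r a b <;> simp only []
    · rw [myLoop_append _ _ _ _ [(a :: g).reverse], myLoop_append _ _ _ _ [[a].reverse]]
      simp
    · rw [ih b (a :: g), ih b [a]]
      simp only [List.modifyHead_modifyHead]
      congr 1
      funext z
      simp

theorem splitBy_cons_cons {α} (r : α → α → Bool) (a b : α) (l : List α) :
    List.splitBy r (a :: b :: l) =
      if r a b then List.modifyHead (a :: ·) (List.splitBy r (b :: l))
      else [a] :: List.splitBy r (b :: l) := by
  show List.splitBy.loop r (b :: l) a [] [] = _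
  simp only [List.splitBy.loop]
  cases h : r a b <;> simp only [h, if_true, if_false, Bool.false_eq_true]
  · rw [myLoop_append _ _ _ _ [[a].reverse]]; rfl
  · show List.splitBy.loop r l b [a] [] = _
    rw [myLoop_modifyHead r l b [a]]
    rfl

theorem splitBy_head_struct (b : Bool) (l : List Bool) :
    ∃ g gs, List.splitBy (· = ·) (b :: l) = (b :: g) :: gs ∧
      (b :: g).Chain' (fun x y => x = y) := by
  obtain ⟨g0, gs, hS⟩ : ∃ g0 gs, List.splitBy (· = ·) (b :: l) = g0 :: gs := by
    cases h : List.splitBy (· = ·) (b :: l) with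
    | nil =>
      have := List.flatten_splitBy (fun x y : Bool => x = y) (b :: l)
      rw [h] at this; simp at this
    | cons g0 gs => exact ⟨g0, gs, rfl⟩
  have hg0ne : g0 ≠ [] := by
    intro hnil
    exact List.nil_notMem_splitBy _ (b :: l) (hnil ▸ (hS ▸ List.mem_cons_self))
  obtain ⟨c, g, rfl⟩ : ∃ c g, g0 = c :: g := by
    cases g0 with
    | nil => exact absurd rfl hg0ne
    | cons c g => exact ⟨c, g, rfl⟩
  have hfl := List.flatten_splitBy (fun x y : Bool => x = y) (b :: l)
  rw [hS] at hfl
  simp only [List.flatten_cons, List.cons_append] at hfl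
  have hc : c = b := (List.cons.injEq _ _ _ _ ▸ hfl).1
  subst hc
  refine ⟨g, gs, hS, ?_⟩
  have := List.isChain_of_mem_splitBy (hS ▸ List.mem_cons_self)
  simpa [List.Chain'] using this

theorem all_false_of_chain' : ∀ (g : List Bool),
    (false :: g).Chain' (fun x y => x = y) → true ∉ (false :: g) := by
  intro g
  induction g with
  | nil => simp
  | cons d g ih =>
    intro h
    simp only [List.Chain', List.isChain_cons_cons] at h
    obtain ⟨hd, h2⟩ := h
    subst hd
    have := ih h2
    simp at this ⊢
    exact this

/-! ### Recursion lemmas for `trueRuns` -/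

theorem trueRuns_nil : trueRuns [] = [] := rfl

theorem trueRuns_false_cons (w : List Bool) : trueRuns (false :: w) = trueRuns w := by
  cases w with
  | nil => rfl
  | cons b w =>
    cases b with
    | true =>
      rw [trueRuns, trueRuns, splitBy_cons_cons]
      norm_num
    | false =>
      obtain ⟨g, gs, hS, hch⟩ := splitBy_head_struct false w
      have hnt : true ∉ (false :: g) := all_false_of_chain' g hch
      rw [trueRuns, trueRuns, splitBy_cons_cons, hS]
      norm_num
      simp [hnt]

theorem trueRuns_true_cons (w : List Bool) :
    trueRuns (true :: w) = if w.head? = some true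
      then List.modifyHead (· + 1) (trueRuns w) else 1 :: trueRuns w := by
  cases w with
  | nil => rfl
  | cons b w =>
    cases b with
    | false =>
      rw [trueRuns, trueRuns, splitBy_cons_cons]
      norm_num
    | true =>
      obtain ⟨g, gs, hS, _⟩ := splitBy_head_struct true w
      rw [trueRuns, trueRuns, splitBy_cons_cons, hS]
      norm_num

/-! ### A simple recursive computation of true-runs -/

def goRuns : List Bool → ℕ → List ℕ
  | [], 0 => []
  | [], n+1 => [n+1]
  | false :: w, 0 => goRuns w 0
  | false :: w, n+1 => (n+1) :: goRuns w 0
  | true :: w, n => goRuns w (n+1)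

theorem goRuns_spec : ∀ (w : List Bool),
    trueRuns w = goRuns w 0 ∧ ∀ n : ℕ, goRuns w (n+1) =
      if w.head? = some true then List.modifyHead (· + (n+1)) (trueRuns w)
      else (n+1) :: trueRuns w := by
  intro w
  induction w with
  | nil => exact ⟨rfl, fun n => rfl⟩
  | cons b w ih =>
    obtain ⟨ih1, ih2⟩ := ih
    cases b with
    | false =>
      constructor
      · rw [trueRuns_false_cons]; exact ih1
      · intro n
        show (n+1) :: goRuns w 0 = _
        rw [← ih1, trueRuns_false_cons]
        simp
    | true =>
      constructor
      · show trueRuns (true :: w) = goRuns w 1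
        rw [trueRuns_true_cons, ih2 0]
      · intro n
        show goRuns w (n+2) = _
        rw [ih2 (n+1), trueRuns_true_cons]
        simp only [List.head?_cons, if_pos rfl]
        by_cases hh : w.head? = some true
        · simp only [if_pos hh, List.modifyHead_modifyHead]
          congr 1
          funext z
          simp only [Function.comp]
          omega
        · simp only [if_neg hh, List.modifyHead]
          congr 1
          omega

/-! ### Lemmas about `pattern` and counting -/

theorem pattern_nil : pattern [] = [false] := rfl

theorem pattern_cons (a : ℕ) (x : List ℕ) :
    pattern (a :: x) = false :: (List.replicate a true ++ pattern x) := by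
  simp [pattern]

theorem pattern_exists_tail (x : List ℕ) : ∃ t, pattern x = false :: t := by
  cases x with
  | nil => exact ⟨[], rfl⟩
  | cons a x => exact ⟨_, pattern_cons a x⟩

theorem count_true_pattern (x : List ℕ) : (pattern x).count true = x.sum := by
  induction x with
  | nil => rfl
  | cons a x ih =>
    rw [pattern_cons]
    simp [List.count_cons, List.count_append, ih]

theorem goRuns_of_count_zero : ∀ (w : List Bool) (n : ℕ), w.count true = 0 →
    goRuns w n = if n = 0 then [] else [n] := by
  intro w
  induction w with
  | nil => intro n _; cases n <;> rfl
  | cons b w ih =>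
    intro n hc
    cases b with
    | true => simp [List.count_cons] at hc
    | false =>
      simp only [List.count_cons] at hc
      norm_num at hc
      cases n with
      | zero => show goRuns w 0 = _; rw [ih 0 hc]
      | succ m => show (m+1) :: goRuns w 0 = _; rw [ih 0 hc]; rfl

theorem goRuns_append_false : ∀ (c : List Bool) (n : ℕ),
    goRuns (c ++ [false]) n = goRuns c n := by
  intro c
  induction c with
  | nil => intro n; cases n <;> rfl
  | cons b c ih =>
    intro n
    cases b with
    | true => show goRuns (c ++ [false]) (n+1) = _; rw [ih]; rfl
    | false =>
      cases n with
      | zero => show goRuns (c ++ [false]) 0 = _; rw [ih]; rfl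
      | succ m => show (m+1) :: goRuns (c ++ [false]) 0 = _; rw [ih]; rfl

theorem sublist_of_ne_head {l w : List Bool} {a b : Bool} (hab : a ≠ b)
    (h : List.Sublist (a :: l) (b :: w)) : List.Sublist (a :: l) w := by
  cases h with
  | cons _ h => exact h
  | cons_cons => exact absurd rfl hab

/-! ### The master refinement lemma -/

theorem master : ∀ (w : List Bool) (a : ℕ) (x : List ℕ) (n : ℕ),
    (∀ b ∈ x, 0 < b) →
    List.Sublist (List.replicate a true ++ pattern x) w →
    a + x.sum = w.count true →
    ∃ B : List (List ℕ), (∀ b ∈ B, b ≠ []) ∧ B.flatten = goRuns w n ∧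
      B.map List.sum = if n + a = 0 then x else (n + a) :: x := by
  intro w
  induction w with
  | nil =>
    intro a x n _ hsub _
    exfalso
    have := List.sublist_nil.mp hsub
    obtain ⟨t, ht⟩ := pattern_exists_tail x
    rcases List.append_eq_nil_iff.mp this with ⟨-, h2⟩
    rw [ht] at h2
    exact List.cons_ne_nil _ _ h2
  | cons b w ih =>
    intro a x n hx hsub hcnt
    cases b with
    | true =>
      have hcw : (true :: w).count true = w.count true + 1 := by
        simp [List.count_cons]
      cases a with
      | zero =>
        exfalso
        simp only [List.replicate_zero, List.nil_append] at hsub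
        obtain ⟨t, ht⟩ := pattern_exists_tail x
        rw [ht] at hsub
        have hsub' : List.Sublist (pattern x) w := ht ▸ sublist_of_ne_head (by simp) hsub
        have hle : (pattern x).count true ≤ w.count true := hsub'.count_le true
        rw [count_true_pattern] at hle
        omega
      | succ a' =>
        have hsub' : List.Sublist (List.replicate a' true ++ pattern x) w := by
          rw [List.replicate_succ, List.cons_append] at hsub
          exact (List.cons_sublist_cons.mp hsub)
        have hcnt' : a' + x.sum = w.count true := by omega
        obtain ⟨B, hB1, hB2, hB3⟩ := ih a' x (n+1) hx hsub' hcnt'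
        refine ⟨B, hB1, hB2, ?_⟩
        rw [hB3]
        have : n + 1 + a' = n + (a' + 1) := by omega
        simp [this]
    | false =>
      have hcw : (false :: w).count true = w.count true := by
        simp [List.count_cons]
      cases a with
      | succ a' =>
        have hsub' : List.Sublist (List.replicate (a'+1) true ++ pattern x) w := by
          rw [List.replicate_succ, List.cons_append] at hsub ⊢
          exact sublist_of_ne_head (by simp) hsub
        obtain ⟨B, hB1, hB2, hB3⟩ := ih (a'+1) x 0 hx hsub' (by omega)
        simp only [Nat.zero_add, if_neg (Nat.succ_ne_zero a')] at hB3
        cases n with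
        | zero =>
          refine ⟨B, hB1, hB2, ?_⟩
          rw [hB3]
          simp
        | succ m =>
          obtain ⟨b0, Bt, rfl⟩ : ∃ b0 Bt, B = b0 :: Bt := by
            cases B with
            | nil => simp at hB3
            | cons b0 Bt => exact ⟨b0, Bt, rfl⟩
          simp only [List.map_cons, List.cons.injEq] at hB3
          obtain ⟨hb0, hBt⟩ := hB3
          refine ⟨((m+1) :: b0) :: Bt, ?_, ?_, ?_⟩
          · intro b hb
            rcases List.mem_cons.mp hb with rfl | hb
            · exact List.cons_ne_nil _ _
            · exact hB1 b (List.mem_cons_of_mem _ hb)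
          · show (m+1) :: (b0 ++ Bt.flatten) = goRuns (false :: w) (m+1)
            show _ = (m+1) :: goRuns w 0
            rw [← hB2]
            rfl
          · simp only [List.map_cons, List.sum_cons, hb0, hBt]
            rw [if_neg (by omega)]
      | zero =>
        simp only [List.replicate_zero, List.nil_append] at hsub
        cases x with
        | nil =>
          have hc0 : w.count true = 0 := by
            simp only [List.sum_nil] at hcnt; omega
          cases n with
          | zero =>
            refine ⟨[], by simp, ?_, by simp⟩
            show _ = goRuns w 0
            rw [goRuns_of_count_zero w 0 hc0]
            rfl
          | succ m =>
            refine ⟨[[m+1]], by simp, ?_, by simp⟩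
            show [m+1] = (m+1) :: goRuns w 0
            rw [goRuns_of_count_zero w 0 hc0]
            simp
        | cons b x' =>
          have hb : 0 < b := hx b List.mem_cons_self
          have hsub' : List.Sublist (List.replicate b true ++ pattern x') w := by
            rw [pattern_cons] at hsub
            exact List.cons_sublist_cons.mp hsub
          have hcnt' : b + x'.sum = w.count true := by
            simp only [List.sum_cons] at hcnt; omega
          obtain ⟨B, hB1, hB2, hB3⟩ := ih b x' 0 (fun y hy => hx y (List.mem_cons_of_mem _ hy))
            hsub' hcnt'
          rw [if_neg (by omega)] at hB3
          simp only [Nat.zero_add] at hB3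
          cases n with
          | zero =>
            refine ⟨B, hB1, hB2, ?_⟩
            rw [hB3]; simp
          | succ m =>
            refine ⟨[m+1] :: B, ?_, ?_, ?_⟩
            · intro g hg
              rcases List.mem_cons.mp hg with rfl | hg
              · exact List.cons_ne_nil _ _
              · exact hB1 g hg
            · show (m+1) :: B.flatten = (m+1) :: goRuns w 0
              rw [hB2]
            · simp only [List.map_cons, List.sum_cons, hB3]
              rw [if_neg (by omega)]
              simp

/-! ### Extracting equality from the refinement -/

theorem length_le_flatten_length : ∀ (B : List (List ℕ)), (∀ b ∈ B, b ≠ []) →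
    B.length ≤ B.flatten.length := by
  intro B
  induction B with
  | nil => simp
  | cons b B ih =>
    intro h
    have hb : b ≠ [] := h b List.mem_cons_self
    have : 1 ≤ b.length := List.length_pos_iff.mpr hb
    have := ih (fun g hg => h g (List.mem_cons_of_mem _ hg))
    simp only [List.length_cons, List.flatten_cons, List.length_append]
    omega

theorem flatten_eq_map_sum : ∀ (B : List (List ℕ)), (∀ b ∈ B, b ≠ []) →
    B.flatten.length = B.length → B.flatten = B.map List.sum := by
  intro B
  induction B with
  | nil => intros; rfl
  | cons b B ih =>
    intro h hlen
    have hb : b ≠ [] := h b List.mem_cons_self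
    obtain ⟨c, b', rfl⟩ : ∃ c b', b = c :: b' := by
      cases b with
      | nil => exact absurd rfl hb
      | cons c b' => exact ⟨c, b', rfl⟩
    have hrest : ∀ g ∈ B, g ≠ [] := fun g hg => h g (List.mem_cons_of_mem _ hg)
    have hle := length_le_flatten_length B hrest
    simp only [List.flatten_cons, List.length_append, List.length_cons] at hlen
    have hb' : b' = [] := by
      cases b' with
      | nil => rfl
      | cons d b'' => simp [List.length_flatten] at hlen hle; omega
    subst hb'
    simp only [List.flatten_cons, List.map_cons, List.sum_cons, List.sum_nil,
      List.singleton_append, List.cons.injEq]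
    constructor
    · omega
    · apply ih hrest
      simp at hlen ⊢
      omega

/-- Per-row soundness: if the canonical pattern of the clue `(x_1, ..., x_k)` is
obtained from the padded word `v = false :: (c ++ [false])` by removing only `false`
entries, and the multiset of true-run lengths of `v` equals the multiset
`{x_1, ..., x_k}`, then the true-runs of `v` (and hence of `c`) are exactly
`(x_1, ..., x_k)` in this order. -/
theorem per_row_soundness (c : List Bool) (x : List ℕ) (hx : ∀ a ∈ x, 0 < a)
    (hsub : List.Sublist (pattern x) (false :: (c ++ [false])))
    (hcount : (pattern x).count true = (false :: (c ++ [false])).count true)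
    (hmult : (↑(trueRuns (false :: (c ++ [false]))) : Multiset ℕ) = (↑x : Multiset ℕ)) :
    trueRuns (false :: (c ++ [false])) = x ∧ trueRuns c = x := by
  set v := false :: (c ++ [false]) with hv
  have hsum : (0 : ℕ) + x.sum = v.count true := by
    rw [← count_true_pattern x, hcount]
    omega
  obtain ⟨B, hB1, hB2, hB3⟩ := master v 0 x 0 hx (by simpa using hsub) hsum
  simp at hB3
  have htr : trueRuns v = goRuns v 0 := (goRuns_spec v).1
  have hlen : (trueRuns v).length = x.length := by
    have := congrArg Multiset.card hmult
    simpa using this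
  have hflen : B.flatten.length = B.length := by
    rw [hB2, ← htr, hlen, ← hB3, List.length_map]
  have hfl := flatten_eq_map_sum B hB1 hflen
  have h1 : trueRuns v = x := by
    rw [htr, ← hB2, hfl, hB3]
  refine ⟨h1, ?_⟩
  have h2 : trueRuns c = goRuns c 0 := (goRuns_spec c).1
  have h3 : goRuns v 0 = goRuns c 0 := by
    show goRuns (c ++ [false]) 0 = goRuns c 0
    exact goRuns_append_false c 0
  rw [h2, ← h3, ← htr, h1]
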